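/- In the m×n grid graph with m,n odd, if row i contains (n+1)/2 elements of an independent set S', then these elements occupy exactly the odd columns {(i,1),(i,3),…,(i,n)}, and consequently row i+1 (if it exists) contains at most (n−1)/2 elements of S'. -/

import Mathlib

/-- Adjacency in the grid graph: Manhattan distance 1. -/
def gridAdj (p q : ℕ × ℕ) : Prop := Nat.dist p.1 q.1 + Nat.dist p.2 q.2 = 1

/-- Vertex set of the m × n grid graph. -/
def gridVerts (m n : ℕ) : Finset (ℕ × ℕ) := Finset.Icc 1 m ×ˢ Finset.Icc 1 n

/-- The set S = {(s,t) : s ≡ t (mod 2)}. -/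
def misSet (m n : ℕ) : Finset (ℕ × ℕ) :=
  (gridVerts m n).filter (fun p => p.1 % 2 = p.2 % 2)

/-- I is an independent set of the m × n grid graph. -/
def IsIndep (m n : ℕ) (I : Finset (ℕ × ℕ)) : Prop :=
  I ⊆ gridVerts m n ∧ ∀ p ∈ I, ∀ q ∈ I, ¬ gridAdj p q

/-!
A set `T ⊆ {1, …, N}` with no two consecutive elements is disjoint from its shift `T + 1`, and both
lie in `{1, …, N + 1}`. If `2 |T| = N + 1` they therefore partition `{1, …, N + 1}`, so there
`t ∈ T ↔ t - 1 ∉ T`, and since `0 ∉ T` this forces `T` to be the set of odd numbers.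
In an independent set of the grid the columns occupied in row `i` have no two consecutive elements
and are disjoint from those occupied in row `i + 1`; a row `i` with `(n + 1) / 2` elements thus
occupies the odd columns and leaves at most `n - (n + 1) / 2` columns for row `i + 1`.
-/

open Finset

theorem union_image_succ_subset_Icc {T : Finset ℕ} {N : ℕ} (hT : T ⊆ Icc 1 N) :
    T ∪ T.image (· + 1) ⊆ Icc 1 (N + 1) := by
  intro t ht
  rcases mem_union.1 ht with ht | ht
  · have := mem_Icc.1 (hT ht); exact mem_Icc.2 (by omega)
  · obtain ⟨a, ha, rfl⟩ := mem_image.1 ht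
    have := mem_Icc.1 (hT ha); exact mem_Icc.2 (by omega)

def NoConsecutive (T : Finset ℕ) : Prop := ∀ a ∈ T, a + 1 ∉ T

namespace NoConsecutive

variable {T : Finset ℕ} {N : ℕ}

theorem disjoint_image_succ (h : NoConsecutive T) : Disjoint T (T.image (· + 1)) := by
  rw [disjoint_left]
  intro _ hb hb'
  obtain ⟨a, ha, rfl⟩ := mem_image.1 hb'
  exact h a ha hb

theorem card_union_image_succ (h : NoConsecutive T) : #(T ∪ T.image (· + 1)) = 2 * #T := by
  rw [card_union_of_disjoint h.disjoint_image_succ,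
    card_image_of_injective _ (add_left_injective 1)]
  ring

theorem mem_iff_odd (h : NoConsecutive T) (hT : T ⊆ Icc 1 N) (hcard : 2 * #T = N + 1)
    {t : ℕ} (ht : t ≤ N + 1) : t ∈ T ↔ t % 2 = 1 := by
  have hunion : T ∪ T.image (· + 1) = Icc 1 (N + 1) :=
    eq_of_subset_of_card_le (union_image_succ_subset_Icc hT)
      (by simp [h.card_union_image_succ, hcard])
  induction t with
  | zero => exact iff_of_false (fun h0 => by simpa using hT h0) (by decide)
  | succ t ih =>
    have hcover : t + 1 ∈ T ∪ T.image (· + 1) := hunion ▸ mem_Icc.2 ⟨by omega, ht⟩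
    rw [mem_union, (add_left_injective 1).mem_finset_image] at hcover
    have hstep : t + 1 ∈ T ↔ t ∉ T := ⟨fun h1 h0 => h t h0 h1, hcover.resolve_right⟩
    exact hstep.trans ((not_congr (ih (by omega))).trans (by omega))

theorem eq_filter_odd (h : NoConsecutive T) (hT : T ⊆ Icc 1 N) (hcard : 2 * #T = N + 1) :
    T = (Icc 1 N).filter (· % 2 = 1) := by
  ext t
  rw [mem_filter]
  constructor
  · intro ht
    have hIcc := hT ht
    exact ⟨hIcc, (h.mem_iff_odd hT hcard (by simp at hIcc; omega)).1 ht⟩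
  · rintro ⟨hIcc, hodd⟩
    exact (h.mem_iff_odd hT hcard (by simp at hIcc; omega)).2 hodd

end NoConsecutive

def rowCols (S : Finset (ℕ × ℕ)) (i : ℕ) : Finset ℕ := (S.filter (·.1 = i)).image Prod.snd

theorem mem_rowCols {S : Finset (ℕ × ℕ)} {i t : ℕ} : t ∈ rowCols S i ↔ (i, t) ∈ S := by
  simp [rowCols]

theorem filter_fst_eq_image_rowCols (S : Finset (ℕ × ℕ)) (i : ℕ) :
    S.filter (·.1 = i) = (rowCols S i).image (Prod.mk i) := by
  ext ⟨a, b⟩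
  simp only [mem_filter, mem_image, mem_rowCols, Prod.mk.injEq]
  constructor
  · rintro ⟨hab, rfl⟩; exact ⟨b, hab, rfl, rfl⟩
  · rintro ⟨_, hab, rfl, rfl⟩; exact ⟨hab, rfl⟩

theorem card_rowCols (S : Finset (ℕ × ℕ)) (i : ℕ) : #(rowCols S i) = #(S.filter (·.1 = i)) := by
  rw [filter_fst_eq_image_rowCols, card_image_of_injective _ (Prod.mk_right_injective i)]

namespace IsIndep

variable {m n : ℕ} {S : Finset (ℕ × ℕ)}

theorem rowCols_subset (hS : IsIndep m n S) (i : ℕ) : rowCols S i ⊆ Icc 1 n := fun _ ht =>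
  (mem_product.1 (hS.1 (mem_rowCols.1 ht))).2

theorem noConsecutive_rowCols (hS : IsIndep m n S) (i : ℕ) : NoConsecutive (rowCols S i) :=
  fun a ha ha' => hS.2 _ (mem_rowCols.1 ha) _ (mem_rowCols.1 ha') (by simp [gridAdj, Nat.dist])

theorem disjoint_rowCols_succ (hS : IsIndep m n S) (i : ℕ) :
    Disjoint (rowCols S i) (rowCols S (i + 1)) :=
  disjoint_left.2 fun _ ht ht' =>
    hS.2 _ (mem_rowCols.1 ht) _ (mem_rowCols.1 ht') (by simp [gridAdj, Nat.dist])

end IsIndep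

theorem stmt18_general (m n : ℕ) (hn : n % 2 = 1)
    (S' : Finset (ℕ × ℕ)) (hI : IsIndep m n S')
    (i : ℕ)
    (hrow : (S'.filter (fun p => p.1 = i)).card = (n + 1) / 2) :
    S'.filter (fun p => p.1 = i) =
      ((Finset.Icc 1 n).filter (fun t => t % 2 = 1)).image (fun t => (i, t)) ∧
    (i + 1 ≤ m → (S'.filter (fun p => p.1 = i + 1)).card ≤ (n - 1) / 2) := by
  have hcard : #(rowCols S' i) = (n + 1) / 2 := (card_rowCols S' i).trans hrow
  refine ⟨?_, fun _ => ?_⟩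
  · rw [filter_fst_eq_image_rowCols, (hI.noConsecutive_rowCols i).eq_filter_odd
      (hI.rowCols_subset i) (by omega)]
  · have hboth := card_le_card (union_subset (hI.rowCols_subset i) (hI.rowCols_subset (i + 1)))
    rw [card_union_of_disjoint (hI.disjoint_rowCols_succ i), card_rowCols S' (i + 1)] at hboth
    simp only [Nat.card_Icc] at hboth
    omega

theorem stmt18 (m n : ℕ) (hm : m % 2 = 1) (hn : n % 2 = 1)
    (S' : Finset (ℕ × ℕ)) (hI : IsIndep m n S')
    (i : ℕ) (hi : 1 ≤ i) (him : i ≤ m)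
    (hrow : (S'.filter (fun p => p.1 = i)).card = (n + 1) / 2) :
    S'.filter (fun p => p.1 = i) =
      ((Finset.Icc 1 n).filter (fun t => t % 2 = 1)).image (fun t => (i, t)) ∧
    (i + 1 ≤ m → (S'.filter (fun p => p.1 = i + 1)).card ≤ (n - 1) / 2) :=
  stmt18_general m n hn S' hI i hrow
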